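/- For G = PGL_2 over F with diagonal torus A acting on both sides, the algebra of bi-A-invariant regular functions on G is generated by the function [a b; c d] ↦ bc/(ad − bc); consequently the invariant-theoretic quotient C^G_{A,A} = Spec F[G]^{A×A} is isomorphic to the affine line A^1. -/

import Mathlib

/-!
STATEMENT 13: For `G = PGL₂` with diagonal torus `A` acting on both sides,
the algebra of bi-`A`-invariant regular functions on `G` is generated by
`[a b; c d] ↦ bc/(ad − bc)`; consequently
`C^G_{A,A} = Spec F[G]^{A×A} ≅ 𝔸¹`.

Concrete model: `F[GL₂] = GL2Ring F` is the localization of the polynomial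
ring `F[x_{ij}]` at the determinant `detPoly = x₀₀x₁₁ − x₀₁x₁₀`, and
`F[PGL₂]^{A×A} = F[GL₂]^{A×A×𝔾_m}` is the subset of elements invariant under
all the scalings `x_{ij} ↦ tᵢ uⱼ x_{ij}` (`t, u ∈ (Fˣ)²`; this includes the
central `𝔾_m`, so these are exactly the bi-`A`-invariant functions on
`PGL₂`).  The scaling action on the localization is the ring map `scale t u`
characterized by `hscale`.  The function `bc/(ad−bc)` is `bcOverDet`.
Note that the function field `F = k(X)` is infinite, which is recorded by
the hypothesis `[Infinite F]` (so that invariance under `Fˣ`-points agrees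
with scheme-theoretic invariance under the torus).

Conclusion: the set of invariants is exactly the `F`-subalgebra generated by
`bcOverDet`, and that subalgebra is a polynomial ring in one variable, i.e.
`C^G_{A,A} ≅ 𝔸¹`.
-/

open MvPolynomial

noncomputable section

/-- The coordinate ring of the space of 2×2 matrices. -/
abbrev GL2Coord (F : Type) [Field F] : Type := MvPolynomial (Fin 2 × Fin 2) F

/-- The determinant `x₀₀x₁₁ − x₀₁x₁₀`. -/
def detPoly (F : Type) [Field F] : GL2Coord F :=
  X (0, 0) * X (1, 1) - X (0, 1) * X (1, 0)

/-- The coordinate ring `F[GL₂]`, the localization away from the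
determinant. -/
abbrev GL2Ring (F : Type) [Field F] : Type := Localization.Away (detPoly F)

/-- The inverse of the determinant in `F[GL₂]`. -/
def invDet (F : Type) [Field F] : GL2Ring F :=
  IsLocalization.Away.invSelf (detPoly F)

/-- The regular function `[a b; c d] ↦ bc/(ad − bc)` on `GL₂`, which descends
to `PGL₂` and is bi-`A`-invariant. -/
def bcOverDet (F : Type) [Field F] : GL2Ring F :=
  algebraMap (GL2Coord F) (GL2Ring F) (X (0, 1) * X (1, 0)) * invDet F

/-- Scaling of the matrix entries, `x_{ij} ↦ tᵢ uⱼ x_{ij}`, i.e. the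
coaction of `A × A` (together with the center) on `F[GL₂]`. -/
def scaleHom (F : Type) [Field F] (t u : Fin 2 → Fˣ) :
    GL2Coord F →ₐ[F] GL2Coord F :=
  aeval (fun p : Fin 2 × Fin 2 => C ((t p.1 : F) * (u p.2 : F)) * X p)
/-!
With `z = bc/(ad − bc)` one has `ad/(ad − bc) = 1 + z`, so each `(ad)^a (bc)^b / (ad − bc)^(a+b)`
lies in `F[z]`. Conversely, write an invariant as `p / (ad − bc)^n`: since `Fˣ` is infinite, a
character `s ↦ s^k` of it determines `k`, so invariance forces every monomial of `p` to have all
row and column sums equal to `n`, i.e. to be a multiple of `(ad)^a (bc)^b` with `a + b = n`.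
Finally `z` is transcendental, as it specializes to `X` at a matrix of determinant one.
-/

theorem MvPolynomial.coeff_aeval_C_mul_X {σ R : Type*} [CommSemiring R] (w : σ → R)
    (p : MvPolynomial σ R) (e : σ →₀ ℕ) :
    coeff e (aeval (fun i => C (w i) * X i) p) = (e.prod fun i k => w i ^ k) * coeff e p := by
  induction p using MvPolynomial.induction_on' with
  | monomial d a =>
    classical
    have hmon : aeval (fun i => C (w i) * X i) (monomial d a) =
        monomial d ((d.prod fun i k => w i ^ k) * a) := by
      rw [aeval_monomial, monomial_eq]
      simp only [mul_pow, Finsupp.prod_mul, ← C_pow, ← map_finsuppProd C, algebraMap_eq, C_mul]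
      ring
    rw [hmon, coeff_monomial, coeff_monomial]
    split_ifs with h
    · rw [h]
    · rw [mul_zero]
  | add p q hp hq => rw [map_add, coeff_add, coeff_add, hp, hq, mul_add]

theorem eq_of_forall_units_pow_eq {F : Type*} [Field F] [Infinite F] {a b : ℕ}
    (h : ∀ s : Fˣ, (s : F) ^ a = (s : F) ^ b) : a = b := by
  have hX : (Polynomial.X ^ (a + 1) : Polynomial F) = Polynomial.X ^ (b + 1) := by
    refine Polynomial.funext fun s => ?_
    by_cases hs : s = 0
    · simp [hs]
    · simpa [pow_succ] using congrArg (· * s) (h (Units.mk0 s hs))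
  simpa using congrArg Polynomial.natDegree hX

namespace GL2

variable {F : Type} [Field F]

theorem algebraMap_detPoly_mul_invDet :
    algebraMap (GL2Coord F) (GL2Ring F) (detPoly F) * invDet F = 1 :=
  IsLocalization.Away.mul_invSelf _

theorem algebraMap_C (a : F) :
    algebraMap (GL2Coord F) (GL2Ring F) (C a) = algebraMap F (GL2Ring F) a := by
  rw [IsScalarTower.algebraMap_apply F (GL2Coord F) (GL2Ring F), algebraMap_eq]

theorem isUnit_invDet : IsUnit (invDet F) :=
  IsUnit.of_mul_eq_one_right _ algebraMap_detPoly_mul_invDet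

theorem exists_eq_algebraMap_mul_invDet_pow (x : GL2Ring F) :
    ∃ (p : GL2Coord F) (n : ℕ), x = algebraMap (GL2Coord F) (GL2Ring F) p * invDet F ^ n := by
  obtain ⟨n, p, hp⟩ := IsLocalization.Away.surj (detPoly F) x
  refine ⟨p, n, ?_⟩
  rw [← hp, mul_assoc, ← mul_pow, algebraMap_detPoly_mul_invDet, one_pow, mul_one]

/-- Evaluation at `[X + 1, X; 1, 1]`, which has determinant one and sends `bcOverDet` to `X`. -/
def evalXMatrix : GL2Coord F →ₐ[F] Polynomial F :=
  aeval fun q => ![![Polynomial.X + 1, Polynomial.X], ![1, 1]] q.1 q.2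

theorem evalXMatrix_detPoly : evalXMatrix (detPoly F) = 1 := by
  simp [evalXMatrix, detPoly]

theorem detPoly_ne_zero : detPoly F ≠ 0 := fun h => by
  simpa [h] using (evalXMatrix_detPoly (F := F))

theorem algebraMap_injective : Function.Injective (algebraMap (GL2Coord F) (GL2Ring F)) :=
  IsLocalization.injective _ (powers_le_nonZeroDivisors_of_noZeroDivisors detPoly_ne_zero)

theorem algebraMap_mul_invDet_pow_injective {p q : GL2Coord F} {n : ℕ}
    (h : algebraMap (GL2Coord F) (GL2Ring F) p * invDet F ^ n =
      algebraMap (GL2Coord F) (GL2Ring F) q * invDet F ^ n) : p = q :=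
  algebraMap_injective ((isUnit_invDet.pow n).mul_left_inj.mp h)

theorem transcendental_bcOverDet : Transcendental F (bcOverDet F) := by
  let Φ : GL2Ring F →ₐ[F] Polynomial F := IsLocalization.liftAlgHom
    (M := Submonoid.powers (detPoly F)) (f := evalXMatrix) (by
      rintro ⟨_, n, rfl⟩
      simp [evalXMatrix_detPoly])
  have hΦ (p : GL2Coord F) : Φ (algebraMap _ _ p) = evalXMatrix p :=
    IsLocalization.lift_eq _ _
  have hΦ_invDet : Φ (invDet F) = 1 := by
    simpa [hΦ, evalXMatrix_detPoly] using congrArg Φ (algebraMap_detPoly_mul_invDet (F := F))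
  have hΦ_bcOverDet : Φ (bcOverDet F) = Polynomial.X := by
    simp [bcOverDet, hΦ, hΦ_invDet, evalXMatrix]
  exact fun h => Polynomial.transcendental_X F (hΦ_bcOverDet ▸ h.algHom Φ)

def detScale (t u : Fin 2 → Fˣ) : Fˣ := t 0 * t 1 * u 0 * u 1

section Scaling

variable {t u : Fin 2 → Fˣ}

theorem scaleHom_X (q : Fin 2 × Fin 2) :
    scaleHom F t u (X q) = C ((t q.1 : F) * u q.2) * X q :=
  aeval_X _ _

theorem scaleHom_detPoly : scaleHom F t u (detPoly F) = C (detScale t u : F) * detPoly F := by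
  simp only [detPoly, map_sub, map_mul, scaleHom_X, detScale, Units.val_mul]
  ring

theorem scaleHom_X01_mul_X10 :
    scaleHom F t u (X (0, 1) * X (1, 0)) = C (detScale t u : F) * (X (0, 1) * X (1, 0)) := by
  simp only [map_mul, scaleHom_X, detScale, Units.val_mul]
  ring

theorem coeff_scaleHom (p : GL2Coord F) (e : (Fin 2 × Fin 2) →₀ ℕ) :
    coeff e (scaleHom F t u p) = (e.prod fun q k => ((t q.1 : F) * u q.2) ^ k) * coeff e p :=
  coeff_aeval_C_mul_X _ _ _

abbrev ExtendsScaleHom (t u : Fin 2 → Fˣ) (σ : GL2Ring F →+* GL2Ring F) : Prop :=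
  ∀ p, σ (algebraMap (GL2Coord F) (GL2Ring F) p) =
    algebraMap (GL2Coord F) (GL2Ring F) (scaleHom F t u p)

variable {σ : GL2Ring F →+* GL2Ring F}

theorem scale_algebraMap_scalar
    (hσ : ExtendsScaleHom t u σ) (a : F) :
    σ (algebraMap F (GL2Ring F) a) = algebraMap F (GL2Ring F) a := by
  rw [IsScalarTower.algebraMap_apply F (GL2Coord F) (GL2Ring F), hσ, AlgHom.commutes]

theorem scale_invDet
    (hσ : ExtendsScaleHom t u σ) :
    σ (invDet F) = algebraMap F (GL2Ring F) (detScale t u : F)⁻¹ * invDet F := by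
  have hσD : σ (algebraMap _ _ (detPoly F)) =
      algebraMap F (GL2Ring F) (detScale t u : F) * algebraMap _ _ (detPoly F) := by
    rw [hσ, scaleHom_detPoly, map_mul, algebraMap_C]
  refine left_inv_eq_right_inv (a := σ (algebraMap _ _ (detPoly F))) ?_ ?_
  · rw [mul_comm, ← map_mul, algebraMap_detPoly_mul_invDet, map_one]
  · rw [hσD, mul_mul_mul_comm, ← map_mul, mul_inv_cancel₀ (detScale t u).ne_zero, map_one,
      one_mul, algebraMap_detPoly_mul_invDet]

theorem scale_algebraMap_mul_invDet_pow
    (hσ : ExtendsScaleHom t u σ) (p : GL2Coord F) (n : ℕ) :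
    σ (algebraMap (GL2Coord F) (GL2Ring F) p * invDet F ^ n) =
      algebraMap (GL2Coord F) (GL2Ring F) (C ((detScale t u : F)⁻¹ ^ n) * scaleHom F t u p) *
        invDet F ^ n := by
  rw [map_mul, map_pow, hσ, scale_invDet hσ, map_mul, algebraMap_C, map_pow]
  ring

theorem scale_bcOverDet
    (hσ : ExtendsScaleHom t u σ) :
    σ (bcOverDet F) = bcOverDet F := by
  rw [bcOverDet]
  have h := scale_algebraMap_mul_invDet_pow hσ (X (0, 1) * X (1, 0)) 1
  rwa [pow_one, pow_one, scaleHom_X01_mul_X10, ← mul_assoc, ← C_mul,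
    inv_mul_cancel₀ (detScale t u).ne_zero, C_1, one_mul] at h

theorem scaleHom_eq_of_scale_fixed
    (hσ : ExtendsScaleHom t u σ) {p : GL2Coord F} {n : ℕ}
    (h : σ (algebraMap (GL2Coord F) (GL2Ring F) p * invDet F ^ n) =
      algebraMap (GL2Coord F) (GL2Ring F) p * invDet F ^ n) :
    scaleHom F t u p = C ((detScale t u : F) ^ n) * p := by
  rw [scale_algebraMap_mul_invDet_pow hσ] at h
  conv_rhs => rw [← algebraMap_mul_invDet_pow_injective h, ← mul_assoc, ← C_mul, ← mul_pow,
    mul_inv_cancel₀ (detScale t u).ne_zero, one_pow, C_1, one_mul]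

theorem scale_eq_self_of_mem_adjoin
    (hσ : ExtendsScaleHom t u σ) {x : GL2Ring F}
    (hx : x ∈ Algebra.adjoin F {bcOverDet F}) : σ x = x := by
  induction hx using Algebra.adjoin_induction with
  | mem x hx => rw [Set.mem_singleton_iff.mp hx, scale_bcOverDet hσ]
  | algebraMap a => exact scale_algebraMap_scalar hσ a
  | add x y _ _ hx hy => rw [map_add, hx, hy]
  | mul x y _ _ hx hy => rw [map_mul, hx, hy]

end Scaling

theorem exponents_of_forall_weight_eq [Infinite F] {e : (Fin 2 × Fin 2) →₀ ℕ} {n : ℕ}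
    (h : ∀ t u : Fin 2 → Fˣ,
      (e.prod fun q k => ((t q.1 : F) * u q.2) ^ k) = (detScale t u : F) ^ n) :
    e (1, 0) = e (0, 1) ∧ e (1, 1) = e (0, 0) ∧ e (0, 0) + e (0, 1) = n := by
  have hprod (t u : Fin 2 → Fˣ) : (e.prod fun q k => ((t q.1 : F) * u q.2) ^ k) =
      ((t 0 : F) * u 0) ^ e (0, 0) * ((t 0 : F) * u 1) ^ e (0, 1) *
        (((t 1 : F) * u 0) ^ e (1, 0) * ((t 1 : F) * u 1) ^ e (1, 1)) := by
    rw [Finsupp.prod_fintype _ _ fun _ => pow_zero _, Fintype.prod_prod_type, Fin.prod_univ_two,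
      Fin.prod_univ_two, Fin.prod_univ_two]
  have row0 : e (0, 0) + e (0, 1) = n := eq_of_forall_units_pow_eq fun s => by
    simpa [detScale, pow_add] using (hprod ![s, 1] 1).symm.trans (h ![s, 1] 1)
  have row1 : e (1, 0) + e (1, 1) = n := eq_of_forall_units_pow_eq fun s => by
    simpa [detScale, pow_add] using (hprod ![1, s] 1).symm.trans (h ![1, s] 1)
  have col0 : e (0, 0) + e (1, 0) = n := eq_of_forall_units_pow_eq fun s => by
    simpa [detScale, pow_add] using (hprod 1 ![s, 1]).symm.trans (h 1 ![s, 1])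
  omega

theorem monomial_eq_of_exponents {e : (Fin 2 × Fin 2) →₀ ℕ} (h10 : e (1, 0) = e (0, 1))
    (h11 : e (1, 1) = e (0, 0)) (c : F) :
    monomial e c = C c * (X (0, 0) * X (1, 1)) ^ e (0, 0) * (X (0, 1) * X (1, 0)) ^ e (0, 1) := by
  rw [monomial_eq, Finsupp.prod_fintype _ _ fun _ => pow_zero _, Fintype.prod_prod_type,
    Fin.prod_univ_two, Fin.prod_univ_two, Fin.prod_univ_two, h10, h11]
  ring

theorem algebraMap_X00_mul_X11_mul_invDet :
    algebraMap (GL2Coord F) (GL2Ring F) (X (0, 0) * X (1, 1)) * invDet F = 1 + bcOverDet F := by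
  have h : algebraMap (GL2Coord F) (GL2Ring F) (X (0, 0) * X (1, 1) - X (0, 1) * X (1, 0)) *
      invDet F = 1 := algebraMap_detPoly_mul_invDet
  rw [map_sub] at h
  rw [bcOverDet]
  linear_combination h

theorem algebraMap_mul_invDet_pow_mem_adjoin (c : F) (a b : ℕ) :
    algebraMap (GL2Coord F) (GL2Ring F)
        (C c * (X (0, 0) * X (1, 1)) ^ a * (X (0, 1) * X (1, 0)) ^ b) * invDet F ^ (a + b) ∈
      Algebra.adjoin F {bcOverDet F} := by
  have h : algebraMap (GL2Coord F) (GL2Ring F)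
      (C c * (X (0, 0) * X (1, 1)) ^ a * (X (0, 1) * X (1, 0)) ^ b) * invDet F ^ (a + b) =
      algebraMap F (GL2Ring F) c * (1 + bcOverDet F) ^ a * bcOverDet F ^ b := by
    rw [← algebraMap_X00_mul_X11_mul_invDet, bcOverDet, map_mul, map_mul, map_pow, map_pow,
      algebraMap_C]
    ring
  rw [h]
  have hz := Algebra.self_mem_adjoin_singleton F (bcOverDet F)
  exact mul_mem (mul_mem (Subalgebra.algebraMap_mem _ c) (pow_mem (add_mem (one_mem _) hz) a))
    (pow_mem hz b)

theorem mem_adjoin_of_forall_scale_eq [Infinite F]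
    {scale : (Fin 2 → Fˣ) → (Fin 2 → Fˣ) → (GL2Ring F →+* GL2Ring F)}
    (hscale : ∀ t u, ExtendsScaleHom t u (scale t u))
    {x : GL2Ring F} (hx : ∀ t u, scale t u x = x) : x ∈ Algebra.adjoin F {bcOverDet F} := by
  obtain ⟨p, n, rfl⟩ := exists_eq_algebraMap_mul_invDet_pow x
  have hp (t u : Fin 2 → Fˣ) : scaleHom F t u p = C ((detScale t u : F) ^ n) * p :=
    scaleHom_eq_of_scale_fixed (hscale t u) (hx t u)
  rw [p.as_sum, map_sum, Finset.sum_mul]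
  refine Subalgebra.sum_mem _ fun e he => ?_
  have hweight (t u : Fin 2 → Fˣ) :
      (e.prod fun q k => ((t q.1 : F) * u q.2) ^ k) = (detScale t u : F) ^ n := by
    have hcoeff := congrArg (coeff e) (hp t u)
    rw [coeff_scaleHom, coeff_C_mul] at hcoeff
    exact mul_right_cancel₀ (mem_support_iff.mp he) hcoeff
  obtain ⟨h10, h11, hn⟩ := exponents_of_forall_weight_eq hweight
  rw [monomial_eq_of_exponents h10 h11, ← hn]
  exact algebraMap_mul_invDet_pow_mem_adjoin _ _ _

end GL2

open GL2 in
theorem pgl2_biinvariant_functions_are_affine_line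
    (F : Type) [Field F] [Infinite F]   -- e.g. the function field F = k(X)
    (scale : (Fin 2 → Fˣ) → (Fin 2 → Fˣ) → (GL2Ring F →+* GL2Ring F))
    (hscale : ∀ (t u : Fin 2 → Fˣ) (p : GL2Coord F),
      scale t u (algebraMap (GL2Coord F) (GL2Ring F) p) =
        algebraMap (GL2Coord F) (GL2Ring F) (scaleHom F t u p)) :
    {x : GL2Ring F | ∀ t u : Fin 2 → Fˣ, scale t u x = x} =
      (Algebra.adjoin F {bcOverDet F} : Subalgebra F (GL2Ring F)) ∧
    ∃ e : Polynomial F ≃ₐ[F] Algebra.adjoin F {bcOverDet F},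
      e Polynomial.X =
        ⟨bcOverDet F, Algebra.self_mem_adjoin_singleton F _⟩ :=
  ⟨Set.Subset.antisymm (fun _ hx => mem_adjoin_of_forall_scale_eq hscale hx)
      fun _ hx t u => scale_eq_self_of_mem_adjoin (hscale t u) hx,
    ⟨Polynomial.algEquivOfTranscendental F _ transcendental_bcOverDet,
      Polynomial.algEquivOfTranscendental_apply_X _ _ _⟩⟩
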